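/- Let β be an alternating bicharacter of type I on a finite abelian group T. Then T is isomorphic to (ℤ₂ × ℤ₂)^m for some m ≥ 0, and there exists a symplectic basis {a₁, b₁, …, a_m, b_m} of T with respect to β. -/

import Mathlib

/-!
The values of `β` are roots of unity in `ℝˣ`, hence `±1`, so `β` is symmetric and
nondegeneracy forces `t ^ 2 = 1` for every `t`. Given `a ≠ 1`, nondegeneracy yields `b` with
`β a b = -1`; every element is then the product of an element of `⟨a, b⟩` and one of the
orthogonal complement of `{a, b}`, on which `β` is again nondegenerate. Induction over subgroups
gives a symplectic family generating `T`. Pairing with the partner family (`a` and `b` swapped)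
detects each coordinate, so the family is a basis. Hence `T` has `4 ^ m` elements, and an
elementary abelian `2`-group is determined by its order, being a vector space over `ZMod 2`.
-/

/-- An alternating bicharacter on a (multiplicative) finite abelian group `T`,
with values in `ℝˣ`. -/
def IsAltBichar {T : Type*} [CommGroup T] (β : T → T → ℝˣ) : Prop :=
  (∀ u v w : T, β (u * v) w = β u w * β v w) ∧
  (∀ u v w : T, β u (v * w) = β u v * β u w) ∧
  (∀ u : T, β u u = 1)

/-- A family `c : ι → T` is a basis of `T` if `T` is the internal direct product of the
cyclic subgroups `⟨c i⟩`, i.e. the natural product map is bijective. -/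
def IsBasisFamily {T : Type*} [CommGroup T] {ι : Type*} [Fintype ι] (c : ι → T) : Prop :=
  Function.Bijective (fun x : (∀ i : ι, Subgroup.zpowers (c i)) => ∏ i : ι, (x i : T))

/-- A family `a₁,b₁,…,a_m,b_m` is symplectic with respect to `β` if
`β(aᵢ,bᵢ) = β(bᵢ,aᵢ) = -1` and `β` takes the value `+1` on all other pairs. -/
def IsSymplecticFamily {T : Type*} [CommGroup T] (β : T → T → ℝˣ) {m : ℕ}
    (a b : Fin m → T) : Prop :=
  (∀ i, β (a i) (b i) = -1 ∧ β (b i) (a i) = -1) ∧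
  (∀ i j, β (a i) (a j) = 1) ∧ (∀ i j, β (b i) (b j) = 1) ∧
  (∀ i j, i ≠ j → β (a i) (b j) = 1 ∧ β (b i) (a j) = 1)

section GroupLemmas

variable {T ι : Type*} [CommGroup T] [Fintype ι]

lemma eq_one_or_eq_of_mem_zpowers {g y : T} (hg : g ^ 2 = 1) (hy : y ∈ Subgroup.zpowers g) :
    y = 1 ∨ y = g := by
  obtain ⟨k, rfl⟩ := Subgroup.mem_zpowers_iff.mp hy
  rcases Int.even_or_odd' k with ⟨n, rfl | rfl⟩
  · simp [zpow_mul, hg]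
  · simp [zpow_add, zpow_mul, hg]

lemma surjective_prod_zpowers {c : ι → T} (hc : Subgroup.closure (Set.range c) = ⊤) :
    Function.Surjective fun x : (∀ i, Subgroup.zpowers (c i)) => ∏ i, (x i : T) := by
  classical
  let φ : (∀ i, Subgroup.zpowers (c i)) →* T :=
    MonoidHom.mk' (fun x => ∏ i, (x i : T)) fun x y => by simp [Finset.prod_mul_distrib]
  have hrange : Subgroup.closure (Set.range c) ≤ φ.range := by
    rw [Subgroup.closure_le]
    rintro _ ⟨i, rfl⟩
    refine ⟨Pi.mulSingle i ⟨c i, Subgroup.mem_zpowers _⟩, ?_⟩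
    simp only [φ, MonoidHom.mk'_apply]
    rw [Finset.prod_eq_single i (fun j _ hj => by simp [Pi.mulSingle_eq_of_ne hj]) (by simp),
      Pi.mulSingle_eq_same]
  exact MonoidHom.range_eq_top.mp (top_le_iff.mp (hc ▸ hrange))

lemma IsBasisFamily.card_eq {c : ι → T} (hc : IsBasisFamily c) :
    Nat.card T = ∏ i, orderOf (c i) := by
  rw [← Nat.card_eq_of_bijective _ hc, Nat.card_pi]
  simp [Nat.card_zpowers]

end GroupLemmas

theorem nonempty_mulEquiv_of_sq_eq_one {G H : Type*} [CommGroup G] [CommGroup H] [Finite G]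
    [Finite H] (hG : ∀ g : G, g ^ 2 = 1) (hH : ∀ h : H, h ^ 2 = 1)
    (hcard : Nat.card G = Nat.card H) : Nonempty (G ≃* H) := by
  let _ := AddCommGroup.zmodModule (G := Additive G) (n := 2) hG
  let _ := AddCommGroup.zmodModule (G := Additive H) (n := 2) hH
  have hrank : Module.finrank (ZMod 2) (Additive G) = Module.finrank (ZMod 2) (Additive H) := by
    apply Nat.pow_right_injective (le_refl 2)
    have hG' := Module.natCard_eq_pow_finrank (K := ZMod 2) (V := Additive G)
    have hH' := Module.natCard_eq_pow_finrank (K := ZMod 2) (V := Additive H)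
    simp only [Nat.card_zmod] at hG' hH'
    exact hG'.symm.trans (hcard.trans hH')
  exact ⟨MulEquiv.toAdditive.symm (LinearEquiv.ofFinrankEq _ _ hrank).toAddEquiv⟩

namespace IsAltBichar

variable {T : Type*} [CommGroup T] {β : T → T → ℝˣ}

def homRight (hβ : IsAltBichar β) (u : T) : T →* ℝˣ :=
  MonoidHom.mk' (β u) (hβ.2.1 u)

@[simp]
lemma homRight_apply (hβ : IsAltBichar β) (u v : T) : hβ.homRight u v = β u v := rfl

lemma apply_one_right (hβ : IsAltBichar β) (u : T) : β u 1 = 1 :=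
  (hβ.homRight u).map_one

lemma mul_apply_swap (hβ : IsAltBichar β) (u v : T) : β u v * β v u = 1 := by
  have h := hβ.2.2 (u * v)
  rwa [hβ.1, hβ.2.1, hβ.2.1, hβ.2.2, hβ.2.2, one_mul, mul_one] at h

def IsNondegenerateOn (β : T → T → ℝˣ) (H : Subgroup T) : Prop :=
  ∀ t ∈ H, (∀ u ∈ H, β u t = 1) → t = 1

def orthPair (hβ : IsAltBichar β) (H : Subgroup T) (a b : T) : Subgroup T :=
  H ⊓ (hβ.homRight a).ker ⊓ (hβ.homRight b).ker

lemma mem_orthPair (hβ : IsAltBichar β) {H : Subgroup T} {a b t : T} :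
    t ∈ hβ.orthPair H a b ↔ t ∈ H ∧ β a t = 1 ∧ β b t = 1 := by
  simp [orthPair, and_assoc]

section Finite

variable [Finite T]

lemma eq_one_or_eq_neg_one (hβ : IsAltBichar β) (u v : T) : β u v = 1 ∨ β u v = -1 := by
  have h : β u v ^ Nat.card T = 1 := by
    rw [← hβ.homRight_apply, ← map_pow, pow_card_eq_one', map_one]
  have h' : (β u v : ℝ) ^ Nat.card T = 1 := by
    rw [← Units.val_pow_eq_pow_val, h, Units.val_one]
  rcases pow_eq_one_iff_cases.mp h' with h0 | h1 | ⟨h1, -⟩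
  · exact absurd h0 Nat.card_pos.ne'
  · exact .inl (Units.ext h1)
  · exact .inr (Units.ext h1)

lemma symm (hβ : IsAltBichar β) (u v : T) : β u v = β v u := by
  rw [eq_inv_of_mul_eq_one_right (hβ.mul_apply_swap v u)]
  rcases hβ.eq_one_or_eq_neg_one v u with h | h <;> simp [h]

lemma sq_eq_one_of_nondegenerate (hβ : IsAltBichar β)
    (hI : ∀ t : T, (∀ u : T, β u t = 1) → t = 1) (t : T) : t ^ 2 = 1 := by
  refine hI _ fun u => ?_
  rw [← hβ.homRight_apply, map_pow, hβ.homRight_apply]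
  rcases hβ.eq_one_or_eq_neg_one u t with h | h <;> simp [h]

lemma exists_mem_closure_pair_mul_orth (hβ : IsAltBichar β) {a b : T} (hab : β a b = -1)
    (u : T) : ∃ w ∈ Subgroup.closure {a, b}, β a (u * w) = 1 ∧ β b (u * w) = 1 := by
  have hba : β b a = -1 := hβ.symm a b ▸ hab
  have hmem : ∀ {x}, x ∈ ({a, b} : Set T) → x ∈ Subgroup.closure {a, b} :=
    fun h => Subgroup.subset_closure h
  rcases hβ.eq_one_or_eq_neg_one a u with h1 | h1 <;>
    rcases hβ.eq_one_or_eq_neg_one b u with h2 | h2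
  · exact ⟨1, one_mem _, by simp [h1, h2]⟩
  · exact ⟨a, hmem (by simp), by simp [hβ.2.1, hβ.2.2, h1, h2, hba]⟩
  · exact ⟨b, hmem (by simp), by simp [hβ.2.1, hβ.2.2, h1, h2, hab]⟩
  · exact ⟨a * b, mul_mem (hmem (by simp)) (hmem (by simp)),
      by simp [hβ.2.1, hβ.2.2, h1, h2, hab, hba]⟩

lemma orthPair_sup_closure_pair (hβ : IsAltBichar β) {H : Subgroup T} {a b : T} (ha : a ∈ H)
    (hb : b ∈ H) (hab : β a b = -1) : hβ.orthPair H a b ⊔ Subgroup.closure {a, b} = H := by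
  have hpair : Subgroup.closure {a, b} ≤ H := (Subgroup.closure_le _).mpr (Set.pair_subset ha hb)
  refine le_antisymm (sup_le (inf_le_left.trans inf_le_left) hpair) fun u hu => ?_
  obtain ⟨w, hw, hwa, hwb⟩ := hβ.exists_mem_closure_pair_mul_orth hab u
  have huw : u * w ∈ hβ.orthPair H a b := hβ.mem_orthPair.mpr ⟨mul_mem hu (hpair hw), hwa, hwb⟩
  simpa using mul_mem (Subgroup.mem_sup_left huw) (Subgroup.mem_sup_right (inv_mem hw))

lemma IsNondegenerateOn.orthPair (hβ : IsAltBichar β) {H : Subgroup T}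
    (hH : IsNondegenerateOn β H) {a b : T} (ha : a ∈ H) (hb : b ∈ H) (hab : β a b = -1) :
    IsNondegenerateOn β (hβ.orthPair H a b) := by
  intro t ht hrad
  obtain ⟨htH, hat, hbt⟩ := hβ.mem_orthPair.mp ht
  refine hH t htH fun u hu => ?_
  obtain ⟨w, hw, hwa, hwb⟩ := hβ.exists_mem_closure_pair_mul_orth hab u
  have hwt : β t w = 1 := by
    have hker : Subgroup.closure {a, b} ≤ (hβ.homRight t).ker :=
      (Subgroup.closure_le _).mpr <| Set.pair_subset (by simp [hβ.symm t, hat])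
        (by simp [hβ.symm t, hbt])
    exact hker hw
  have hwH : w ∈ H := (Subgroup.closure_le _).mpr (Set.pair_subset ha hb) hw
  have huwt := hrad (u * w) (hβ.mem_orthPair.mpr ⟨mul_mem hu hwH, hwa, hwb⟩)
  rwa [hβ.1, hβ.symm w, hwt, mul_one] at huwt

lemma isSymplecticFamily_cons (hβ : IsAltBichar β) {m : ℕ} {a b : Fin m → T} {a₀ b₀ : T}
    (hs : IsSymplecticFamily β a b) (h₀ : β a₀ b₀ = -1)
    (horth : ∀ x ∈ Set.range a ∪ Set.range b, β a₀ x = 1 ∧ β b₀ x = 1) :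
    IsSymplecticFamily β (Fin.cons a₀ a) (Fin.cons b₀ b) := by
  have ha i : β a₀ (a i) = 1 ∧ β b₀ (a i) = 1 := horth _ (.inl ⟨i, rfl⟩)
  have hb i : β a₀ (b i) = 1 ∧ β b₀ (b i) = 1 := horth _ (.inr ⟨i, rfl⟩)
  have ha' i : β (a i) a₀ = 1 ∧ β (a i) b₀ = 1 := by simp [hβ.symm (a i), ha]
  have hb' i : β (b i) a₀ = 1 ∧ β (b i) b₀ = 1 := by simp [hβ.symm (b i), hb]
  have h₀' : β b₀ a₀ = -1 := hβ.symm a₀ b₀ ▸ h₀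
  obtain ⟨hab, haa, hbb, hne⟩ := hs
  refine ⟨fun i => ?_, fun i j => ?_, fun i j => ?_, fun i j hij => ?_⟩ <;>
    cases i using Fin.cases <;> (try cases j using Fin.cases) <;>
    simp_all [hβ.2.2]

theorem exists_isSymplecticFamily_closure_eq (hβ : IsAltBichar β) (H : Subgroup T)
    (hH : IsNondegenerateOn β H) :
    ∃ m, ∃ a b : Fin m → T, IsSymplecticFamily β a b ∧
      Subgroup.closure (Set.range a ∪ Set.range b) = H := by
  induction H using WellFoundedLT.induction with
  | _ H ih =>
  rcases H.bot_or_exists_ne_one with rfl | ⟨a, ha, ha1⟩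
  · exact ⟨0, Fin.elim0, Fin.elim0, ⟨nofun, nofun, nofun, nofun⟩, by simp⟩
  obtain ⟨b, hb, hba⟩ : ∃ b ∈ H, β b a = -1 := by
    by_contra! h
    exact ha1 (hH a ha fun u hu => (hβ.eq_one_or_eq_neg_one u a).resolve_right (h u hu))
  have hab : β a b = -1 := hβ.symm a b ▸ hba
  have hlt : hβ.orthPair H a b < H := by
    refine SetLike.lt_iff_le_and_exists.mpr ⟨inf_le_left.trans inf_le_left, a, ha, fun h => ?_⟩
    have := (hβ.mem_orthPair.mp h).2.2
    simp [hba] at this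
  obtain ⟨m, a', b', hs, hgen⟩ := ih _ hlt (hH.orthPair hβ ha hb hab)
  refine ⟨m + 1, Fin.cons a a', Fin.cons b b', hβ.isSymplecticFamily_cons hs hab fun x hx => ?_, ?_⟩
  · have hx' : x ∈ hβ.orthPair H a b := hgen ▸ Subgroup.subset_closure hx
    exact (hβ.mem_orthPair.mp hx').2
  · have hset : Set.range (Fin.cons a a' : Fin (m + 1) → T) ∪ Set.range (Fin.cons b b') =
        (Set.range a' ∪ Set.range b') ∪ {a, b} := by
      simp only [Fin.range_cons]
      ext x
      simp only [Set.mem_union, Set.mem_insert_iff, Set.mem_singleton_iff]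
      tauto
    rw [hset, Subgroup.closure_union, hgen, hβ.orthPair_sup_closure_pair ha hb hab]

end Finite

lemma injective_prod_zpowers {ι : Type*} [Fintype ι] (hβ : IsAltBichar β) {c d : ι → T}
    (hc : ∀ i, c i ^ 2 = 1) (hdiag : ∀ i, β (d i) (c i) = -1)
    (hoff : ∀ i j, i ≠ j → β (d i) (c j) = 1) :
    Function.Injective fun x : (∀ i, Subgroup.zpowers (c i)) => ∏ i, (x i : T) := by
  have hcoord (x : ∀ i, Subgroup.zpowers (c i)) (i : ι) :
      β (d i) (∏ j, (x j : T)) = β (d i) (x i) := by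
    rw [← hβ.homRight_apply, map_prod, Finset.prod_eq_single i _ (by simp)]
    · rfl
    intro j _ hji
    have hker : Subgroup.zpowers (c j) ≤ (hβ.homRight (d i)).ker := by
      simp [hoff i j hji.symm]
    exact hker (x j).2
  intro x y hxy
  funext i
  have hi : β (d i) (x i) = β (d i) (y i) := by
    rw [← hcoord, ← hcoord y]
    exact congrArg _ hxy
  apply Subtype.ext
  rcases eq_one_or_eq_of_mem_zpowers (hc i) (x i).2 with hx | hx <;>
    rcases eq_one_or_eq_of_mem_zpowers (hc i) (y i).2 with hy | hy <;>
    simp_all [hβ.apply_one_right]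

end IsAltBichar

lemma IsSymplecticFamily.apply_interleave {T : Type*} [CommGroup T] {β : T → T → ℝˣ} {m : ℕ}
    {a b : Fin m → T} (hs : IsSymplecticFamily β a b) (p q : Fin m × Bool) :
    β (if p.2 then a p.1 else b p.1) (if q.2 then b q.1 else a q.1) =
      if p = q then -1 else 1 := by
  obtain ⟨hab, haa, hbb, hne⟩ := hs
  obtain ⟨i, _ | _⟩ := p <;> obtain ⟨j, _ | _⟩ := q <;> by_cases hij : i = j <;>
    simp_all

/-- If `β` is an alternating bicharacter of type I on a finite abelian group `T`, then
`T ≅ (ℤ₂ × ℤ₂)^m` for some `m ≥ 0` and there is a symplectic basis of `T`. -/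
theorem stmt3 {T : Type*} [CommGroup T] [Fintype T]
    (β : T → T → ℝˣ) (hβ : IsAltBichar β)
    (hI : ∀ t : T, (∀ u : T, β u t = 1) → t = 1) :
    ∃ m : ℕ, Nonempty (T ≃* Multiplicative (Fin m → ZMod 2 × ZMod 2)) ∧
      ∃ a b : Fin m → T, IsSymplecticFamily β a b ∧
        IsBasisFamily (fun p : Fin m × Bool => if p.2 then b p.1 else a p.1) := by
  have hsq := hβ.sq_eq_one_of_nondegenerate hI
  obtain ⟨m, a, b, hs, hgen⟩ :=
    hβ.exists_isSymplecticFamily_closure_eq ⊤ fun t _ ht => hI t fun u => ht u trivial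
  set c := fun p : Fin m × Bool => if p.2 then b p.1 else a p.1
  have hdiag p : β (if p.2 then a p.1 else b p.1) (c p) = -1 :=
    (hs.apply_interleave p p).trans (if_pos rfl)
  have hclosure : Subgroup.closure (Set.range c) = ⊤ := by
    refine top_unique (hgen ▸ Subgroup.closure_mono ?_)
    rintro _ (⟨i, rfl⟩ | ⟨i, rfl⟩)
    exacts [⟨(i, false), rfl⟩, ⟨(i, true), rfl⟩]
  have hbasis : IsBasisFamily c :=
    ⟨hβ.injective_prod_zpowers (fun _ => hsq _) hdiag
      fun p q hpq => (hs.apply_interleave p q).trans (if_neg hpq),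
     surjective_prod_zpowers hclosure⟩
  have horder p : orderOf (c p) = 2 :=
    orderOf_eq_prime (hsq _) fun h => by simpa [h, hβ.apply_one_right] using (hdiag p).symm
  have hcard : Nat.card T = Nat.card (Multiplicative (Fin m → ZMod 2 × ZMod 2)) := by
    rw [hbasis.card_eq]
    simp [horder, pow_mul']
  have hsq' (x : Multiplicative (Fin m → ZMod 2 × ZMod 2)) : x ^ 2 = 1 := by
    induction x using Multiplicative.rec with | ofAdd v => ?_
    rw [← ofAdd_nsmul, two_nsmul]
    ext i <;> simp [CharTwo.add_self_eq_zero]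
  exact ⟨m, nonempty_mulEquiv_of_sq_eq_one hsq hsq' hcard, a, b, hs, hbasis⟩
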